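/- Let f : ℝ → ℝ be continuous with |f| ≤ M, let N ≥ 1, R > 0, γ = ψ(MR) where ψ(t)=t/√(1+t²), and let φ̃ be the truncated extension of φ(s)=s/√(1−s²) at level γ. Suppose u, v : [0,R] → ℝ solve u' = φ̃⁻¹(v/r^{N−1}), v' = −r^{N−1} f(u) on (0,R) with v(0) = 0 and u ∈ C¹([0,R]). Then |u'(r)| ≤ γ for every r ∈ [0,R], and consequently φ̃(u'(r)) = φ(u'(r)) for all r. -/

import Mathlib

/-!
On `(0, r)` the flux satisfies `|v'(s)| = s^{N-1} |f(u s)| ≤ M r^{N-1}`, so by the mean value theorem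
and `v 0 = 0` we get `|v r / r^{N-1}| ≤ M r ≤ M R`. The truncated extension `φ̃` continues `φ`
affinely with positive slope beyond `±γ`, and `φ(γ) = M R`; hence `|φ̃ s| ≤ M R` forces `|s| ≤ γ`.
Applied to `s = u' r = φ̃⁻¹(v r / r^{N-1})` this bounds `u'` on `(0, R)`, and continuity of `u'`
carries the bound to `[0, R]`, where `φ̃` agrees with `φ`.
-/

open Set

theorem ContinuousOn.le_of_forall_mem_Ioo_le {α β : Type*} [LinearOrder α] [TopologicalSpace α]
    [OrderTopology α] [DenselyOrdered α] [LinearOrder β] [TopologicalSpace β]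
    [OrderClosedTopology β] {g : α → β} {a b : α} {c : β} (hab : a ≠ b)
    (hg : ContinuousOn g (Icc a b)) (h : ∀ x ∈ Ioo a b, g x ≤ c) :
    ∀ x ∈ Icc a b, g x ≤ c := by
  have hclosed : IsClosed (Icc a b ∩ g ⁻¹' Iic c) :=
    hg.preimage_isClosed_of_isClosed isClosed_Icc isClosed_Iic
  have hsub : closure (Ioo a b) ⊆ Icc a b ∩ g ⁻¹' Iic c :=
    closure_minimal (fun x hx => ⟨Ioo_subset_Icc_self hx, h x hx⟩) hclosed
  rw [closure_Ioo hab] at hsub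
  exact fun x hx => (hsub hx).2

theorem abs_sub_le_mul_of_hasDerivAt {v v' : ℝ → ℝ} {a b C : ℝ} (hab : a < b)
    (hv : ContinuousOn v (Icc a b)) (hd : ∀ x ∈ Ioo a b, HasDerivAt v (v' x) x)
    (hC : ∀ x ∈ Ioo a b, |v' x| ≤ C) : |v b - v a| ≤ C * (b - a) := by
  obtain ⟨c, hc, hslope⟩ := exists_hasDerivAt_eq_slope v v' hab hv hd
  have hba : 0 < b - a := sub_pos.mpr hab
  rw [eq_div_iff hba.ne'] at hslope
  rw [← hslope, abs_mul, abs_of_pos hba]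
  exact mul_le_mul_of_nonneg_right (hC c hc) hba.le

theorem abs_div_pow_le_of_hasDerivAt_neg_pow_mul {v g : ℝ → ℝ} {n : ℕ} {M r : ℝ} (hr : 0 < r)
    (hv : ContinuousOn v (Icc 0 r)) (hd : ∀ s ∈ Ioo 0 r, HasDerivAt v (-(s ^ n * g s)) s)
    (hg : ∀ s ∈ Ioo 0 r, |g s| ≤ M) (hv0 : v 0 = 0) : |v r / r ^ n| ≤ M * r := by
  have hrn : 0 < r ^ n := pow_pos hr n
  have hflux : ∀ s ∈ Ioo 0 r, |-(s ^ n * g s)| ≤ r ^ n * M := by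
    rintro s ⟨hs0, hsr⟩
    rw [abs_neg, abs_mul, abs_of_pos (pow_pos hs0 n)]
    gcongr
    exact hg s ⟨hs0, hsr⟩
  have hvr := abs_sub_le_mul_of_hasDerivAt hr hv hd hflux
  rw [hv0, sub_zero, sub_zero] at hvr
  rw [abs_div, abs_of_pos hrn, div_le_iff₀ hrn]
  linarith

theorem abs_le_of_abs_le_of_affine_outside {φ : ℝ → ℝ} {γ c k : ℝ} (hk : 0 < k)
    (hright : ∀ s, γ < s → φ s = k * (s - γ) + c)
    (hleft : ∀ s, s < -γ → φ s = k * (s + γ) - c) {s : ℝ} (hs : |φ s| ≤ c) : |s| ≤ γ := by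
  rw [abs_le] at hs ⊢
  constructor
  · by_contra! hlt
    have := hleft s hlt
    nlinarith
  · by_contra! hlt
    have := hright s hlt
    nlinarith

theorem one_sub_sq_div_sqrt_one_add_sq (a : ℝ) :
    1 - (a / √(1 + a ^ 2)) ^ 2 = (1 + a ^ 2)⁻¹ := by
  have h : (0 : ℝ) < 1 + a ^ 2 := by positivity
  rw [div_pow, Real.sq_sqrt h.le]
  field_simp
  ring

theorem div_sqrt_one_sub_sq_div_sqrt_one_add_sq (a : ℝ) :
    a / √(1 + a ^ 2) / √(1 - (a / √(1 + a ^ 2)) ^ 2) = a := by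
  have h : (0 : ℝ) < √(1 + a ^ 2) := Real.sqrt_pos.mpr (by positivity)
  rw [one_sub_sq_div_sqrt_one_add_sq, Real.sqrt_inv]
  field_simp

theorem stmt14_general (N : ℕ) (M R : ℝ) (hR : 0 < R)
    (f : ℝ → ℝ) (hfM : ∀ s : ℝ, |f s| ≤ M)
    (γ : ℝ) (hγ : γ = M * R / Real.sqrt (1 + (M * R)^2))
    (φt ψt : ℝ → ℝ)
    (h1 : ∀ s : ℝ, |s| ≤ γ → φt s = s / Real.sqrt (1 - s^2))
    (h2 : ∀ s : ℝ, γ < s →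
      φt s = (1 - γ^2)^(-(3:ℝ)/2) * (s - γ) + γ / Real.sqrt (1 - γ^2))
    (h3 : ∀ s : ℝ, s < -γ →
      φt s = (1 - γ^2)^(-(3:ℝ)/2) * (s + γ) - γ / Real.sqrt (1 - γ^2))
    (hinv₂ : Function.RightInverse ψt φt)
    (u v u' : ℝ → ℝ)
    (hu'c : ContinuousOn u' (Set.Icc 0 R))
    (hvc : ContinuousOn v (Set.Icc 0 R))
    (hu' : ∀ r ∈ Set.Ioo (0:ℝ) R, u' r = ψt (v r / r^(N-1)))
    (hvd : ∀ r ∈ Set.Ioo (0:ℝ) R, HasDerivAt v (-(r^(N-1) * f (u r))) r)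
    (hv0 : v 0 = 0) :
    ∀ r ∈ Set.Icc (0:ℝ) R,
      |u' r| ≤ γ ∧ φt (u' r) = u' r / Real.sqrt (1 - (u' r)^2) := by
  have hM : 0 ≤ M := (abs_nonneg _).trans (hfM 0)
  have hφγ : γ / √(1 - γ ^ 2) = M * R := hγ ▸ div_sqrt_one_sub_sq_div_sqrt_one_add_sq _
  have hslope : 0 < (1 - γ ^ 2) ^ (-(3:ℝ)/2) := by
    refine Real.rpow_pos_of_pos ?_ _
    rw [hγ, one_sub_sq_div_sqrt_one_add_sq]
    positivity
  have hopen : ∀ r ∈ Ioo 0 R, |u' r| ≤ γ := by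
    rintro r ⟨hr0, hrR⟩
    rw [hu' r ⟨hr0, hrR⟩]
    refine abs_le_of_abs_le_of_affine_outside hslope h2 h3 ?_
    rw [hinv₂, hφγ]
    calc |v r / r ^ (N - 1)| ≤ M * r :=
          abs_div_pow_le_of_hasDerivAt_neg_pow_mul hr0 (hvc.mono (Icc_subset_Icc_right hrR.le))
            (fun s hs => hvd s ⟨hs.1, hs.2.trans hrR⟩) (fun s _ => hfM _) hv0
      _ ≤ M * R := mul_le_mul_of_nonneg_left hrR.le hM
  intro r hr
  have hbound := hu'c.abs.le_of_forall_mem_Ioo_le hR.ne hopen r hr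
  exact ⟨hbound, h1 _ hbound⟩

theorem stmt14 (N : ℕ) (hN : 1 ≤ N) (M R : ℝ) (hM : 0 < M) (hR : 0 < R)
    (f : ℝ → ℝ) (hf : Continuous f) (hfM : ∀ s : ℝ, |f s| ≤ M)
    (γ : ℝ) (hγ : γ = M * R / Real.sqrt (1 + (M * R)^2))
    (φt ψt : ℝ → ℝ)
    (h1 : ∀ s : ℝ, |s| ≤ γ → φt s = s / Real.sqrt (1 - s^2))
    (h2 : ∀ s : ℝ, γ < s →
      φt s = (1 - γ^2)^(-(3:ℝ)/2) * (s - γ) + γ / Real.sqrt (1 - γ^2))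
    (h3 : ∀ s : ℝ, s < -γ →
      φt s = (1 - γ^2)^(-(3:ℝ)/2) * (s + γ) - γ / Real.sqrt (1 - γ^2))
    (hinv₁ : Function.LeftInverse ψt φt) (hinv₂ : Function.RightInverse ψt φt)
    (u v u' : ℝ → ℝ)
    (huc : ContinuousOn u (Set.Icc 0 R)) (hu'c : ContinuousOn u' (Set.Icc 0 R))
    (hvc : ContinuousOn v (Set.Icc 0 R))
    (hud : ∀ r ∈ Set.Ioo (0:ℝ) R, HasDerivAt u (u' r) r)
    (hu' : ∀ r ∈ Set.Ioo (0:ℝ) R, u' r = ψt (v r / r^(N-1)))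
    (hvd : ∀ r ∈ Set.Ioo (0:ℝ) R, HasDerivAt v (-(r^(N-1) * f (u r))) r)
    (hv0 : v 0 = 0) :
    ∀ r ∈ Set.Icc (0:ℝ) R,
      |u' r| ≤ γ ∧ φt (u' r) = u' r / Real.sqrt (1 - (u' r)^2) :=
  stmt14_general N M R hR f hfM γ hγ φt ψt h1 h2 h3 hinv₂ u v u' hu'c hvc hu' hvd hv0
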